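/- arXiv:2512.03112 — 2 statements merged into one kernel-verified Lean document; each statement's English description precedes it below -/
import Mathlib

section
/- For a nonzero vector y ∈ ℝ^p and 1 ≤ s ≤ p, the normalized hard-thresholding vector H(y;s)/‖H(y;s)‖₂ is a global minimizer of ‖y - β‖₂² subject to ‖β‖₀ ≤ s and ‖β‖₂ = 1, where H(y;s) keeps the s largest-magnitude entries of y and zeroes out the rest. -/
/-!
For a unit vector `β` supported on a set `T` with `#T ≤ s`, Cauchy–Schwarz on the coordinates
in `T` gives `⟪y, β⟫ ≤ (∑_{j ∈ T} y_j²)^{1/2}`, and this is at most `(∑_{j ∈ S} y_j²)^{1/2} = ‖H‖`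
because `S` collects `s` largest entries of `|y|`. The bound is attained at `β = H / ‖H‖`, and on the
unit sphere `‖y - β‖² = ‖y‖² - 2⟪y, β⟫ + 1` is minimized exactly by maximizing `⟪y, β⟫`.
-/

set_option autoImplicit false

open Classical in
/-- number of nonzero entries -/
noncomputable def l0 {p : ℕ} (β : Fin p → ℝ) : ℕ :=
  (Finset.univ.filter fun j => β j ≠ 0).card

open Finset

section TopSum

variable {ι M : Type*} [DecidableEq ι] [AddCommMonoid M] [LinearOrder M] [IsOrderedAddMonoid M]

theorem Finset.sum_le_sum_of_forall_le_of_card_le {g : ι → M} {S T : Finset ι}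
    (hcard : #T ≤ #S) (hg : ∀ i ∈ S, 0 ≤ g i) (hS : ∀ i ∈ S, ∀ j ∉ S, g j ≤ g i) :
    ∑ j ∈ T, g j ≤ ∑ i ∈ S, g i := by
  have hsdiff_card : #(T \ S) ≤ #(S \ T) := by
    have h₁ := card_sdiff_add_card_inter T S
    have h₂ := card_sdiff_add_card_inter S T
    rw [inter_comm] at h₂
    omega
  have hsdiff : ∑ j ∈ T \ S, g j ≤ ∑ i ∈ S \ T, g i := by
    rcases (S \ T).eq_empty_or_nonempty with hempty | hne
    · rw [hempty, card_empty, Nat.le_zero, card_eq_zero] at hsdiff_card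
      rw [hsdiff_card, hempty]
    obtain ⟨i₀, hi₀, hmin⟩ := exists_min_image (S \ T) g hne
    have hi₀S : i₀ ∈ S := (mem_sdiff.mp hi₀).1
    calc ∑ j ∈ T \ S, g j
        ≤ #(T \ S) • g i₀ := sum_le_card_nsmul _ _ _ fun j hj ↦ hS i₀ hi₀S j (mem_sdiff.mp hj).2
      _ ≤ #(S \ T) • g i₀ := nsmul_le_nsmul_left (hg i₀ hi₀S) hsdiff_card
      _ ≤ ∑ i ∈ S \ T, g i := card_nsmul_le_sum _ _ _ hmin
  calc ∑ j ∈ T, g j = ∑ j ∈ S ∩ T, g j + ∑ j ∈ T \ S, g j := by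
        rw [inter_comm, sum_inter_add_sum_sdiff]
    _ ≤ ∑ j ∈ S ∩ T, g j + ∑ i ∈ S \ T, g i := add_le_add_right hsdiff _
    _ = ∑ i ∈ S, g i := sum_inter_add_sum_sdiff S T g

end TopSum

section Euclidean

variable {ι : Type*} [Fintype ι]

theorem EuclideanSpace.inner_eq_sum_of_support {x β : EuclideanSpace ℝ ι} {T : Finset ι}
    (hβ : ∀ j ∉ T, β j = 0) : inner ℝ x β = ∑ j ∈ T, x j * β j := by
  have hsum : inner ℝ x β = ∑ j, x j * β j := by simp [PiLp.inner_apply, mul_comm]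
  rw [hsum, sum_subset (subset_univ T) fun j _ hj ↦ by rw [hβ j hj, mul_zero]]

theorem EuclideanSpace.norm_sq_eq_sum_of_support {β : EuclideanSpace ℝ ι} {T : Finset ι}
    (hβ : ∀ j ∉ T, β j = 0) : ‖β‖ ^ 2 = ∑ j ∈ T, β j ^ 2 := by
  rw [← real_inner_self_eq_norm_sq, inner_eq_sum_of_support hβ]
  simp only [sq]

theorem EuclideanSpace.inner_le_sqrt_mul_norm_of_support (x : EuclideanSpace ℝ ι)
    {β : EuclideanSpace ℝ ι} {T : Finset ι} (hβ : ∀ j ∉ T, β j = 0) :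
    inner ℝ x β ≤ √(∑ j ∈ T, x j ^ 2) * ‖β‖ := by
  rw [inner_eq_sum_of_support hβ, ← Real.sqrt_sq (norm_nonneg β), norm_sq_eq_sum_of_support hβ]
  exact Real.sum_mul_le_sqrt_mul_sqrt T _ _

end Euclidean

theorem norm_sub_sq_le_norm_sub_sq_of_inner_le {F : Type*} [SeminormedAddCommGroup F]
    [InnerProductSpace ℝ F] {y u β : F} (hnorm : ‖u‖ = ‖β‖) (hinner : inner ℝ y β ≤ inner ℝ y u) :
    ‖y - u‖ ^ 2 ≤ ‖y - β‖ ^ 2 := by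
  rw [norm_sub_sq_real, norm_sub_sq_real, hnorm]
  linarith

theorem exists_mem_ne_zero_of_forall_abs_le {ι : Type*} {y : ι → ℝ} (hy : y ≠ 0)
    {S : Finset ι} (hSne : S.Nonempty) (hS : ∀ i ∈ S, ∀ j ∉ S, |y j| ≤ |y i|) :
    ∃ i ∈ S, y i ≠ 0 := by
  obtain ⟨j, hj⟩ := Function.ne_iff.mp hy
  by_cases hjS : j ∈ S
  · exact ⟨j, hjS, hj⟩
  obtain ⟨i, hi⟩ := hSne
  refine ⟨i, hi, fun hyi ↦ hj ?_⟩
  simpa [hyi] using hS i hi j hjS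

theorem l0_le_card_of_support {p : ℕ} {β : Fin p → ℝ} {S : Finset (Fin p)}
    (hβ : ∀ j ∉ S, β j = 0) : l0 β ≤ #S :=
  card_le_card fun j hj ↦ by_contra fun hjS ↦ (mem_filter.mp hj).2 (hβ j hjS)

theorem ne_zero_of_eq_ite {ι : Type*} [DecidableEq ι] {S : Finset ι}
    {y H : EuclideanSpace ℝ ι} (hy : y ≠ 0) (hSne : S.Nonempty)
    (hSmax : ∀ i ∈ S, ∀ j ∉ S, |y j| ≤ |y i|) (hH : ∀ j, H j = if j ∈ S then y j else 0) :
    H ≠ 0 := by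
  obtain ⟨i, hi, hyi⟩ :=
    exists_mem_ne_zero_of_forall_abs_le (fun h ↦ hy (by ext j; simp [h])) hSne hSmax
  exact fun h ↦ hyi (by simpa [h, hi] using (hH i).symm)

section Restriction

variable {ι : Type*} [Fintype ι] [DecidableEq ι] {S : Finset ι} {y H : EuclideanSpace ℝ ι}

theorem norm_sq_eq_sum_of_eq_ite (hH : ∀ j, H j = if j ∈ S then y j else 0) :
    ‖H‖ ^ 2 = ∑ j ∈ S, y j ^ 2 := by
  rw [EuclideanSpace.norm_sq_eq_sum_of_support fun j hj ↦ by rw [hH j, if_neg hj]]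
  exact sum_congr rfl fun j hj ↦ by rw [hH j, if_pos hj]

theorem inner_eq_norm_sq_of_eq_ite (hH : ∀ j, H j = if j ∈ S then y j else 0) :
    inner ℝ y H = ‖H‖ ^ 2 := by
  rw [EuclideanSpace.inner_eq_sum_of_support fun j hj ↦ by rw [hH j, if_neg hj],
    norm_sq_eq_sum_of_eq_ite hH]
  exact sum_congr rfl fun j hj ↦ by rw [hH j, if_pos hj, sq]

end Restriction

theorem stmt1_general (p s : ℕ) (hs : 1 ≤ s)
    (y : EuclideanSpace ℝ (Fin p)) (hy : y ≠ 0)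
    (S : Finset (Fin p)) (hScard : S.card = s)
    (hSmax : ∀ i ∈ S, ∀ j ∉ S, |y j| ≤ |y i|)
    (H : EuclideanSpace ℝ (Fin p)) (hH : ∀ j, H j = if j ∈ S then y j else 0) :
    H ≠ 0 ∧
    l0 (fun j => (‖H‖⁻¹ • H) j) ≤ s ∧ ‖‖H‖⁻¹ • H‖ = 1 ∧
    ∀ β : EuclideanSpace ℝ (Fin p), l0 (fun j => β j) ≤ s → ‖β‖ = 1 →
      ‖y - ‖H‖⁻¹ • H‖ ^ 2 ≤ ‖y - β‖ ^ 2 := by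
  have hHne : H ≠ 0 := ne_zero_of_eq_ite hy (card_pos.mp (hScard ▸ hs)) hSmax hH
  have hnorm : ‖‖H‖⁻¹ • H‖ = 1 := by
    rw [norm_smul, norm_inv, norm_norm, inv_mul_cancel₀ (norm_ne_zero_iff.mpr hHne)]
  have hinner : inner ℝ y (‖H‖⁻¹ • H) = ‖H‖ := by
    rw [real_inner_smul_right, inner_eq_norm_sq_of_eq_ite hH]
    field_simp
  refine ⟨hHne, hScard ▸ l0_le_card_of_support fun j hj ↦ ?_, hnorm, fun β hβ hβnorm ↦ ?_⟩
  · simp [hH j, hj]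
  set T := univ.filter fun j ↦ β j ≠ 0
  have hβT : ∀ j ∉ T, β j = 0 := fun j hj ↦ by simpa [T] using hj
  refine norm_sub_sq_le_norm_sub_sq_of_inner_le (hnorm.trans hβnorm.symm) ?_
  calc inner ℝ y β ≤ √(∑ j ∈ T, y j ^ 2) * ‖β‖ :=
        EuclideanSpace.inner_le_sqrt_mul_norm_of_support y hβT
    _ ≤ √(∑ j ∈ S, y j ^ 2) := by
        rw [hβnorm, mul_one]
        refine Real.sqrt_le_sqrt <| sum_le_sum_of_forall_le_of_card_le (hScard ▸ hβ)
          (fun _ _ ↦ sq_nonneg _) fun i hi j hj ↦ sq_le_sq.mpr (hSmax i hi j hj)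
    _ = ‖H‖ := by rw [← norm_sq_eq_sum_of_eq_ite hH, Real.sqrt_sq (norm_nonneg H)]
    _ = inner ℝ y (‖H‖⁻¹ • H) := hinner.symm

/-- the normalized hard-thresholding vector `H(y;s)/‖H(y;s)‖` is a global
minimizer of `‖y - β‖²` subject to `‖β‖₀ ≤ s` and `‖β‖ = 1`.  The hard-thresholding
operator is encoded by a set `S` of `s` indices of largest magnitude (ties broken by
any fixed rule). -/
theorem stmt1 (p s : ℕ) (hs : 1 ≤ s) (hsp : s ≤ p)
    (y : EuclideanSpace ℝ (Fin p)) (hy : y ≠ 0)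
    (S : Finset (Fin p)) (hScard : S.card = s)
    (hSmax : ∀ i ∈ S, ∀ j ∉ S, |y j| ≤ |y i|)
    (H : EuclideanSpace ℝ (Fin p)) (hH : ∀ j, H j = if j ∈ S then y j else 0) :
    H ≠ 0 ∧
    l0 (fun j => (‖H‖⁻¹ • H) j) ≤ s ∧ ‖‖H‖⁻¹ • H‖ = 1 ∧
    ∀ β : EuclideanSpace ℝ (Fin p), l0 (fun j => β j) ≤ s → ‖β‖ = 1 →
      ‖y - ‖H‖⁻¹ • H‖ ^ 2 ≤ ‖y - β‖ ^ 2 :=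
  stmt1_general p s hs y hy S hScard hSmax H hH
end

section
/- With the same setup, if ρ > ‖ZᵀWZ‖₂ strictly, then l(γ^{(k)}) - l(γ^{(k+1)}) ≥ ((ρ - ‖ZᵀWZ‖₂)/2)·‖γ^{(k+1)} - γ^{(k)}‖₂², and consequently ‖γ^{(k+1)} - γ^{(k)}‖₂ → 0 as k → ∞. -/
set_option autoImplicit false

open Matrix

/-!
Write `A = ZᵀWZ`. Since `l` is quadratic, `l (γ⁻ + d) = l γ⁻ + ⟨∇l γ⁻, d⟩ + ½ ⟨d, A d⟩`
exactly, and `⟨d, A d⟩ ≤ ‖A‖₂ ‖d‖²`, so the surrogate majorizes `l` with room to spare: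
`g γ γ⁻ ≥ l γ + ((ρ - ‖A‖₂)/2) ‖γ - γ⁻‖²`. As `g γ⁻ γ⁻ = l γ⁻` and the previous iterate is
itself feasible, minimality of `γ⁽ᵏ⁺¹⁾` gives the sufficient decrease. The losses are then
nonincreasing and bounded below by `0`, hence convergent, so the decreases, and with them the
steps, tend to `0`.
-/

open Filter Topology

namespace Matrix

variable {n : Type*} [Fintype n] [DecidableEq n]

open scoped RealInnerProductSpace in
theorem dotProduct_mulVec_le_opNorm_mul (A : Matrix n n ℝ) (x : n → ℝ) :
    x ⬝ᵥ A *ᵥ x ≤ ‖toEuclideanCLM (𝕜 := ℝ) A‖ * (x ⬝ᵥ x) := by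
  have hx : x ⬝ᵥ x = ‖WithLp.toLp 2 x‖ ^ 2 := by
    rw [← real_inner_self_eq_norm_sq, EuclideanSpace.inner_toLp_toLp, star_trivial]
  calc x ⬝ᵥ A *ᵥ x = ⟪WithLp.toLp 2 x, toEuclideanCLM (𝕜 := ℝ) A (WithLp.toLp 2 x)⟫ :=
        (inner_toEuclideanCLM A _ _).symm
    _ ≤ ‖WithLp.toLp 2 x‖ * ‖toEuclideanCLM (𝕜 := ℝ) A (WithLp.toLp 2 x)‖ :=
        real_inner_le_norm _ _
    _ ≤ ‖WithLp.toLp 2 x‖ * (‖toEuclideanCLM (𝕜 := ℝ) A‖ * ‖WithLp.toLp 2 x‖) := by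
        gcongr; exact (toEuclideanCLM (𝕜 := ℝ) A).le_opNorm _
    _ = ‖toEuclideanCLM (𝕜 := ℝ) A‖ * (x ⬝ᵥ x) := by rw [hx]; ring

end Matrix

section WeightedLeastSquares

variable {m n : Type*} [Fintype m] [Fintype n] (Z : Matrix m n ℝ) (W : Matrix m m ℝ)
  (t : m → ℝ)

noncomputable def weightedLoss (γ : n → ℝ) : ℝ :=
  (1 / 2) * ((Z *ᵥ γ - t) ⬝ᵥ W *ᵥ (Z *ᵥ γ - t))

noncomputable def lossSurrogate (ρ : ℝ) (γ γm : n → ℝ) : ℝ :=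
  weightedLoss Z W t γm + Zᵀ *ᵥ (W *ᵥ (Z *ᵥ γm - t)) ⬝ᵥ (γ - γm)
    + (ρ / 2) * ((γ - γm) ⬝ᵥ (γ - γm))

@[simp]
theorem lossSurrogate_self (ρ : ℝ) (γ : n → ℝ) :
    lossSurrogate Z W t ρ γ γ = weightedLoss Z W t γ := by
  simp [lossSurrogate]

theorem weightedLoss_nonneg (hW : W.PosSemidef) (γ : n → ℝ) : 0 ≤ weightedLoss Z W t γ := by
  have := hW.dotProduct_mulVec_nonneg (Z *ᵥ γ - t)
  rw [star_trivial] at this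
  unfold weightedLoss
  positivity

variable {W}

theorem weightedLoss_add (hW : W.IsSymm) (γ d : n → ℝ) :
    weightedLoss Z W t (γ + d) = weightedLoss Z W t γ + Zᵀ *ᵥ (W *ᵥ (Z *ᵥ γ - t)) ⬝ᵥ d
      + (1 / 2) * (d ⬝ᵥ (Zᵀ * W * Z) *ᵥ d) := by
  have hres : Z *ᵥ (γ + d) - t = (Z *ᵥ γ - t) + Z *ᵥ d := by
    rw [mulVec_add]; abel
  have hcross : Z *ᵥ d ⬝ᵥ W *ᵥ (Z *ᵥ γ - t) = (Z *ᵥ γ - t) ⬝ᵥ W *ᵥ (Z *ᵥ d) := by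
    rw [dotProduct_mulVec, ← mulVec_transpose, hW.eq, dotProduct_comm]
  have hgrad : Zᵀ *ᵥ (W *ᵥ (Z *ᵥ γ - t)) ⬝ᵥ d = (Z *ᵥ γ - t) ⬝ᵥ W *ᵥ (Z *ᵥ d) := by
    rw [mulVec_transpose, ← dotProduct_mulVec, dotProduct_comm, hcross]
  have hquad : d ⬝ᵥ (Zᵀ * W * Z) *ᵥ d = Z *ᵥ d ⬝ᵥ W *ᵥ (Z *ᵥ d) := by
    rw [← mulVec_mulVec, ← mulVec_mulVec, mulVec_transpose, dotProduct_comm,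
      ← dotProduct_mulVec, dotProduct_comm]
  rw [weightedLoss, weightedLoss, hres, hgrad, hquad]
  simp only [add_dotProduct, dotProduct_add, mulVec_add, hcross]
  ring

theorem weightedLoss_add_le_lossSurrogate [DecidableEq n] (hW : W.IsSymm) (ρ : ℝ)
    (γ γm : n → ℝ) :
    weightedLoss Z W t γ
        + ((ρ - ‖toEuclideanCLM (𝕜 := ℝ) (Zᵀ * W * Z)‖) / 2) * ((γ - γm) ⬝ᵥ (γ - γm))
      ≤ lossSurrogate Z W t ρ γ γm := by
  have hexpand := weightedLoss_add Z t hW γm (γ - γm)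
  rw [add_sub_cancel] at hexpand
  have hquad := (Zᵀ * W * Z).dotProduct_mulVec_le_opNorm_mul (γ - γm)
  rw [lossSurrogate, hexpand]
  linarith

theorem mul_le_weightedLoss_sub_of_lossSurrogate_le [DecidableEq n] (hW : W.IsSymm) {ρ : ℝ}
    {γ γ' : n → ℝ} (h : lossSurrogate Z W t ρ γ' γ ≤ lossSurrogate Z W t ρ γ γ) :
    ((ρ - ‖toEuclideanCLM (𝕜 := ℝ) (Zᵀ * W * Z)‖) / 2) * ((γ' - γ) ⬝ᵥ (γ' - γ))
      ≤ weightedLoss Z W t γ - weightedLoss Z W t γ' := by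
  have := weightedLoss_add_le_lossSurrogate Z t hW ρ γ' γ
  rw [lossSurrogate_self] at h
  linarith

end WeightedLeastSquares

theorem tendsto_zero_of_mul_le_sub_succ {L S : ℕ → ℝ} {c : ℝ} (hc : 0 < c) (hS : ∀ k, 0 ≤ S k)
    (hL : BddBelow (Set.range L)) (hdecr : ∀ k, c * S k ≤ L k - L (k + 1)) :
    Tendsto S atTop (𝓝 0) := by
  have hanti : Antitone L := antitone_nat_of_succ_le fun k => by nlinarith [hS k, hdecr k]
  have hlim := tendsto_atTop_ciInf hanti hL
  have hgap : Tendsto (fun k => (L k - L (k + 1)) / c) atTop (𝓝 0) := by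
    simpa using (hlim.sub (hlim.comp (tendsto_add_atTop_nat 1))).div_const c
  exact squeeze_zero hS (fun k => (le_div_iff₀' hc).2 (hdecr k)) hgap

theorem stmt5_general (N p : ℕ) (Z : Matrix (Fin N) (Fin p) ℝ) (w : Fin N → ℝ)
    (hw : ∀ i, 0 ≤ w i) (W : Matrix (Fin N) (Fin N) ℝ) (hW : W = Matrix.diagonal w)
    (t : Fin N → ℝ)
    (ρ : ℝ) (hρ : ρ > ‖Matrix.toEuclideanCLM (𝕜 := ℝ) (Zᵀ * W * Z)‖)
    (l : (Fin p → ℝ) → ℝ)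
    (hl : ∀ γ, l γ = (1 / 2) * ((Z.mulVec γ - t) ⬝ᵥ W.mulVec (Z.mulVec γ - t)))
    (g : (Fin p → ℝ) → (Fin p → ℝ) → ℝ)
    (hg : ∀ γ γm, g γ γm = l γm + (Zᵀ.mulVec (W.mulVec (Z.mulVec γm - t))) ⬝ᵥ (γ - γm)
        + (ρ / 2) * ((γ - γm) ⬝ᵥ (γ - γm)))
    (feasible : (Fin p → ℝ) → Prop)
    (γseq : ℕ → Fin p → ℝ)
    (h0 : feasible (γseq 0))
    (hiter : ∀ k : ℕ, feasible (γseq (k + 1)) ∧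
        ∀ β, feasible β → g (γseq (k + 1)) (γseq k) ≤ g β (γseq k)) :
    (∀ k : ℕ, l (γseq k) - l (γseq (k + 1)) ≥
        ((ρ - ‖Matrix.toEuclideanCLM (𝕜 := ℝ) (Zᵀ * W * Z)‖) / 2) *
          (∑ j, (γseq (k + 1) j - γseq k j) ^ 2)) ∧
    Filter.Tendsto (fun k : ℕ => Real.sqrt (∑ j, (γseq (k + 1) j - γseq k j) ^ 2))
      Filter.atTop (nhds 0) := by
  obtain rfl : l = weightedLoss Z W t := funext hl
  obtain rfl : g = lossSurrogate Z W t ρ := funext fun γ => funext (hg γ)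
  have hfeasible : ∀ k, feasible (γseq k)
    | 0 => h0
    | k + 1 => (hiter k).1
  have hdecr : ∀ k, ((ρ - ‖toEuclideanCLM (𝕜 := ℝ) (Zᵀ * W * Z)‖) / 2) *
      (∑ j, (γseq (k + 1) j - γseq k j) ^ 2)
        ≤ weightedLoss Z W t (γseq k) - weightedLoss Z W t (γseq (k + 1)) := fun k => by
    simpa [dotProduct, sq] using mul_le_weightedLoss_sub_of_lossSurrogate_le Z t
      (hW ▸ isSymm_diagonal w) ((hiter k).2 _ (hfeasible k))
  have hbdd : BddBelow (Set.range fun k => weightedLoss Z W t (γseq k)) :=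
    ⟨0, Set.forall_mem_range.2 fun k =>
      weightedLoss_nonneg Z W t (hW ▸ posSemidef_diagonal_iff.2 hw) (γseq k)⟩
  refine ⟨hdecr, ?_⟩
  simpa using (tendsto_zero_of_mul_le_sub_succ (half_pos (sub_pos.2 hρ))
    (fun k => Finset.sum_nonneg fun j _ => sq_nonneg _) hbdd hdecr).sqrt

/-- with `ρ > ‖ZᵀWZ‖₂` strictly, each MM step decreases the objective by at
least `((ρ - ‖ZᵀWZ‖₂)/2)·‖γ⁽ᵏ⁺¹⁾ - γ⁽ᵏ⁾‖²`, and consequently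
`‖γ⁽ᵏ⁺¹⁾ - γ⁽ᵏ⁾‖₂ → 0` as `k → ∞`. -/
theorem stmt5 (N p s : ℕ) (Z : Matrix (Fin N) (Fin p) ℝ) (w : Fin N → ℝ)
    (hw : ∀ i, 0 ≤ w i) (W : Matrix (Fin N) (Fin N) ℝ) (hW : W = Matrix.diagonal w)
    (t : Fin N → ℝ)
    (ρ : ℝ) (hρ : ρ > ‖Matrix.toEuclideanCLM (𝕜 := ℝ) (Zᵀ * W * Z)‖)
    (l : (Fin p → ℝ) → ℝ)
    (hl : ∀ γ, l γ = (1 / 2) * ((Z.mulVec γ - t) ⬝ᵥ W.mulVec (Z.mulVec γ - t)))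
    (g : (Fin p → ℝ) → (Fin p → ℝ) → ℝ)
    (hg : ∀ γ γm, g γ γm = l γm + (Zᵀ.mulVec (W.mulVec (Z.mulVec γm - t))) ⬝ᵥ (γ - γm)
        + (ρ / 2) * ((γ - γm) ⬝ᵥ (γ - γm)))
    (feasible : (Fin p → ℝ) → Prop)
    (hfeas : ∀ γ, feasible γ ↔ (l0 γ ≤ s ∧ Real.sqrt (∑ j, γ j ^ 2) = 1))
    (γseq : ℕ → Fin p → ℝ)
    (h0 : feasible (γseq 0))
    (hiter : ∀ k : ℕ, feasible (γseq (k + 1)) ∧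
        ∀ β, feasible β → g (γseq (k + 1)) (γseq k) ≤ g β (γseq k)) :
    (∀ k : ℕ, l (γseq k) - l (γseq (k + 1)) ≥
        ((ρ - ‖Matrix.toEuclideanCLM (𝕜 := ℝ) (Zᵀ * W * Z)‖) / 2) *
          (∑ j, (γseq (k + 1) j - γseq k j) ^ 2)) ∧
    Filter.Tendsto (fun k : ℕ => Real.sqrt (∑ j, (γseq (k + 1) j - γseq k j) ^ 2))
      Filter.atTop (nhds 0) :=
  stmt5_general N p Z w hw W hW t ρ hρ l hl g hg feasible γseq h0 hiter
end
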